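/- arXiv:2504.10824 — 6 statements merged into one kernel-verified Lean document; each statement's English description precedes it below -/
import Mathlib

section
/- For all integers r ≥ 1 and j ≥ 1, ⌊(13r - 9)/14⌋ + ⌊(13j - r - 1)/14⌋ ≥ ⌊(13j - 2)/14⌋, and the minimum over r ≥ 1 of the left-hand side equals ⌊(13j - 2)/14⌋ (attained at r = 1). -/
/-! For `r ≥ 2` use `⌊x⌋ + ⌊y⌋ ≥ ⌊x + y⌋ - 1`: here `x + y = (12r + 13j - 10)/14 ≥ (13j - 2)/14 + 1`.
For `r = 1` the first summand is `⌊4/14⌋ = 0`, which gives equality. -/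

theorem Int.add_ediv_sub_one_le_ediv_add_ediv (a b : ℤ) {c : ℤ} (hc : 0 < c) :
    (a + b) / c - 1 ≤ a / c + b / c := by
  have ha := Int.lt_ediv_add_one_mul_self a hc
  have hb := Int.lt_ediv_add_one_mul_self b hc
  have hab : (a + b) / c < a / c + b / c + 2 := by
    rw [Int.ediv_lt_iff_lt_mul hc]
    linarith
  omega

theorem stmt2_general (j : ℤ) :
    (∀ r : ℤ, 1 ≤ r →
      (13 * r - 9).fdiv 14 + (13 * j - r - 1).fdiv 14 ≥ (13 * j - 2).fdiv 14) ∧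
    ((13 * 1 - 9 : ℤ)).fdiv 14 + (13 * j - 1 - 1).fdiv 14 = (13 * j - 2).fdiv 14 := by
  simp only [Int.fdiv_eq_ediv_of_nonneg _ (by norm_num : (0 : ℤ) ≤ 14)]
  refine ⟨fun r hr => ?_, by omega⟩
  obtain rfl | hr := hr.eq_or_lt
  · omega
  calc (13 * j - 2) / 14
      ≤ ((13 * r - 9) + (13 * j - r - 1)) / 14 - 1 := by omega
    _ ≤ (13 * r - 9) / 14 + (13 * j - r - 1) / 14 :=
        Int.add_ediv_sub_one_le_ediv_add_ediv _ _ (by norm_num)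

theorem stmt2 (j : ℤ) (hj : 1 ≤ j) :
    (∀ r : ℤ, 1 ≤ r →
      (13 * r - 9).fdiv 14 + (13 * j - r - 1).fdiv 14 ≥ (13 * j - 2).fdiv 14) ∧
    ((13 * 1 - 9 : ℤ)).fdiv 14 + (13 * j - 1 - 1).fdiv 14 = (13 * j - 2).fdiv 14 :=
  stmt2_general j
end

section
/- Let u, k : ℕ → ℤ satisfy: 13^⌊(13j-9)/14⌋ divides u j and 13^⌊(13j-9)/14⌋ divides k j for all j ≥ 1. Then for all s, t ≥ 1 with s + t > 3, 13^(1 + ⌊(13(s+t)-46)/14⌋) divides (u s) * (k t) - (u t) * (k s). -/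
theorem stmt9 (u k : ℕ → ℤ)
    (hu : ∀ j : ℕ, 1 ≤ j → (13:ℤ)^(((13 * (j:ℤ) - 9).fdiv 14).toNat) ∣ u j)
    (hk : ∀ j : ℕ, 1 ≤ j → (13:ℤ)^(((13 * (j:ℤ) - 9).fdiv 14).toNat) ∣ k j) :
    ∀ s t : ℕ, 1 ≤ s → 1 ≤ t → 3 < s + t →
      (13:ℤ)^((1 + (13 * ((s:ℤ) + t) - 46).fdiv 14).toNat) ∣ u s * k t - u t * k s := by
  intro s t hs ht hst
  set A := ((13 * (s:ℤ) - 9).fdiv 14).toNat with hA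
  set B := ((13 * (t:ℤ) - 9).fdiv 14).toNat with hB
  set E := ((1 + (13 * ((s:ℤ) + t) - 46).fdiv 14)).toNat with hE
  have hEle : E ≤ A + B := by
    rw [hA, hB, hE, Int.fdiv_eq_ediv_of_nonneg _ (by norm_num), Int.fdiv_eq_ediv_of_nonneg _ (by norm_num),
      Int.fdiv_eq_ediv_of_nonneg _ (by norm_num)]
    omega
  refine dvd_trans (pow_dvd_pow (13:ℤ) hEle) ?_
  have h1 : (13:ℤ)^(A+B) ∣ u s * k t := by
    rw [pow_add]; exact mul_dvd_mul (hu s hs) (hk t ht)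
  have h2 : (13:ℤ)^(A+B) ∣ u t * k s := by
    rw [pow_add, mul_comm ((13:ℤ)^A)]; exact mul_dvd_mul (hu t ht) (hk s hs)
  exact dvd_sub h1 h2
end

section
/- Let N ≥ 1 and let μ : ℕ → ℕ → ℤ be antisymmetric (μ i j = -(μ j i)) with μ i j = 0 for i = j, and suppose 13^(1 + ⌊(13(i+j)-46)/14⌋) divides μ i j whenever i + j > 3, and 13 divides μ i j whenever i + j = 3 (with i, j ranging over 1..N). Let c : ℕ → ℕ → ℤ satisfy: 13^⌊(13s-i-1)/14⌋ divides c i s whenever 13s - i - 1 ≥ 0, interpreting the exponent as max(0, ⌊(13s-i-1)/14⌋). Define γ s t = Σ_{i=1}^{N} Σ_{j=1}^{N} (c i s)·(c j t)·(μ i j). Then for all s, t ≥ 1, 13^(2 + ⌊(13(s+t)-33)/14⌋) divides γ s t, where the exponent is interpreted as max(0, 2 + ⌊(13(s+t)-33)/14⌋). -/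
theorem stmt10 (N : ℕ) (hN : 1 ≤ N) (μ : ℕ → ℕ → ℤ)
    (hanti : ∀ i j, μ i j = -(μ j i))
    (hdiag : ∀ i, μ i i = 0)
    (hμ : ∀ i j, 1 ≤ i → i ≤ N → 1 ≤ j → j ≤ N → 3 < i + j →
      (13:ℤ)^((max 0 (1 + (13 * ((i:ℤ) + j) - 46).fdiv 14)).toNat) ∣ μ i j)
    (hμ3 : ∀ i j, 1 ≤ i → i ≤ N → 1 ≤ j → j ≤ N → i + j = 3 → (13:ℤ) ∣ μ i j)
    (c : ℕ → ℕ → ℤ)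
    (hc : ∀ i s : ℕ, 1 ≤ i → 1 ≤ s →
      (13:ℤ)^((max 0 ((13 * (s:ℤ) - i - 1).fdiv 14)).toNat) ∣ c i s) :
    ∀ s t : ℕ, 1 ≤ s → 1 ≤ t →
      (13:ℤ)^((max 0 (2 + (13 * ((s:ℤ) + t) - 33).fdiv 14)).toNat) ∣
        ∑ i ∈ Finset.Icc 1 N, ∑ j ∈ Finset.Icc 1 N, (c i s) * (c j t) * (μ i j) := by
  intro s t hs ht
  apply Finset.dvd_sum
  intro i hi
  apply Finset.dvd_sum
  intro j hj
  simp only [Finset.mem_Icc] at hi hj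
  have ha := hc i s hi.1 hs
  have hb := hc j t hj.1 ht
  have hfd : ∀ a : ℤ, a.fdiv 14 = a / 14 := fun a => Int.fdiv_eq_ediv_of_nonneg a (by norm_num)
  rcases lt_trichotomy (i + j) 3 with h3 | h3 | h3
  · have : i = 1 ∧ j = 1 := by omega
    obtain ⟨rfl, rfl⟩ := this
    rw [hdiag]
    simp
  · have hm := hμ3 i j hi.1 hi.2 hj.1 hj.2 h3
    have key : (13:ℤ)^((max 0 (2 + (13 * ((s:ℤ) + t) - 33).fdiv 14)).toNat) ∣
        (13:ℤ)^((max 0 ((13 * (s:ℤ) - i - 1).fdiv 14)).toNat) *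
        (13:ℤ)^((max 0 ((13 * (t:ℤ) - j - 1).fdiv 14)).toNat) * (13:ℤ)^1 := by
      rw [← pow_add, ← pow_add]
      apply pow_dvd_pow
      simp only [hfd]
      omega
    calc (13:ℤ)^((max 0 (2 + (13 * ((s:ℤ) + t) - 33).fdiv 14)).toNat)
        ∣ _ * _ * (13:ℤ)^1 := key
      _ ∣ c i s * c j t * μ i j := mul_dvd_mul (mul_dvd_mul ha hb) (by simpa using hm)
  · have hm := hμ i j hi.1 hi.2 hj.1 hj.2 h3
    have key : (13:ℤ)^((max 0 (2 + (13 * ((s:ℤ) + t) - 33).fdiv 14)).toNat) ∣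
        (13:ℤ)^((max 0 ((13 * (s:ℤ) - i - 1).fdiv 14)).toNat) *
        (13:ℤ)^((max 0 ((13 * (t:ℤ) - j - 1).fdiv 14)).toNat) *
        (13:ℤ)^((max 0 (1 + (13 * ((i:ℤ) + j) - 46).fdiv 14)).toNat) := by
      rw [← pow_add, ← pow_add]
      apply pow_dvd_pow
      simp only [hfd]
      omega
    exact key.trans (mul_dvd_mul (mul_dvd_mul ha hb) hm)
end

section
/- Let h : ℕ → ℕ → ℤ satisfy π(h r j) ≥ 0 for 1 ≤ j ≤ r and π(h r j) ≥ j - r for j > r, where π is the 13-adic valuation (and the condition is vacuous when h r j = 0). Let k : ℕ → ℤ with π(k r) = r - 1 for 1 ≤ r ≤ 6 and π(k 7) = 5. Then for every j ≥ 1 and every r with 1 ≤ r ≤ 7 (and k r · h r j ≠ 0), π((k r) * (h r j)) ≥ ⌊(13j - 9)/14⌋. -/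
/-!
For `r ≤ 6` the hypotheses give `π(k_r h_{r,j}) ≥ (r - 1) + max(0, j - r) ≥ j - 1`, and for `r = 7`
they give `π(k_7 h_{7,j}) ≥ 5 + max(0, j - 7) = max(5, j - 2)`. Both dominate `⌊(13j - 9)/14⌋`,
which is at most `j - 1`, at most `j - 2` once `j ≥ 6`, and at most `5` while `j ≤ 7`.
-/

lemma thirteen_mul_sub_nine_fdiv_fourteen_le {j r : ℤ} (hj : 1 ≤ j) (hr : 1 ≤ r) (hr7 : r ≤ 7) :
    (13 * j - 9).fdiv 14 ≤ min (r - 1) 5 + max 0 (j - r) := by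
  rw [Int.fdiv_eq_ediv_of_nonneg _ (by norm_num)]
  omega

lemma min_sub_one_five_le_padicValInt {p : ℕ} {k : ℕ → ℤ}
    (hk : ∀ r : ℕ, 1 ≤ r → r ≤ 6 → (padicValInt p (k r) : ℤ) = (r : ℤ) - 1)
    (hk7 : padicValInt p (k 7) = 5) {r : ℕ} (hr : 1 ≤ r) (hr7 : r ≤ 7) :
    min ((r : ℤ) - 1) 5 ≤ padicValInt p (k r) := by
  rcases Nat.lt_or_ge r 7 with hr6 | hr7'
  · rw [hk r hr (by omega)]
    exact min_le_left _ _
  · obtain rfl : r = 7 := by omega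
    rw [hk7]
    exact min_le_right _ _

theorem stmt14_general (h : ℕ → ℕ → ℤ) (k : ℕ → ℤ)
    (hh2 : ∀ r j : ℕ, r < j → h r j ≠ 0 → ((j:ℤ) - r) ≤ (padicValInt 13 (h r j) : ℤ))
    (hk : ∀ r : ℕ, 1 ≤ r → r ≤ 6 → (padicValInt 13 (k r) : ℤ) = (r:ℤ) - 1)
    (hk7 : padicValInt 13 (k 7) = 5) :
    ∀ j r : ℕ, 1 ≤ j → 1 ≤ r → r ≤ 7 → k r * h r j ≠ 0 →
      ((13 * (j:ℤ) - 9).fdiv 14) ≤ (padicValInt 13 (k r * h r j) : ℤ) := by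
  intro j r hj hr hr7 hne
  have : Fact (Nat.Prime 13) := ⟨by norm_num⟩
  obtain ⟨hk0, hh0⟩ := mul_ne_zero_iff.mp hne
  have hvk := min_sub_one_five_le_padicValInt hk hk7 hr hr7
  have hvh : max 0 ((j : ℤ) - r) ≤ padicValInt 13 (h r j) := by
    refine max_le (Nat.cast_nonneg _) ?_
    rcases le_or_gt j r with hjr | hjr
    · exact (sub_nonpos.mpr (by exact_mod_cast hjr)).trans (Nat.cast_nonneg _)
    · exact hh2 r j hjr hh0
  rw [padicValInt.mul hk0 hh0, Nat.cast_add]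
  exact (thirteen_mul_sub_nine_fdiv_fourteen_le (by exact_mod_cast hj) (by exact_mod_cast hr)
    (by exact_mod_cast hr7)).trans (add_le_add hvk hvh)

theorem stmt14 (h : ℕ → ℕ → ℤ) (k : ℕ → ℤ)
    (hh1 : ∀ r j : ℕ, 1 ≤ j → j ≤ r → h r j ≠ 0 → (0:ℤ) ≤ (padicValInt 13 (h r j) : ℤ))
    (hh2 : ∀ r j : ℕ, r < j → h r j ≠ 0 → ((j:ℤ) - r) ≤ (padicValInt 13 (h r j) : ℤ))
    (hk : ∀ r : ℕ, 1 ≤ r → r ≤ 6 → (padicValInt 13 (k r) : ℤ) = (r:ℤ) - 1)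
    (hk7 : padicValInt 13 (k 7) = 5) :
    ∀ j r : ℕ, 1 ≤ j → 1 ≤ r → r ≤ 7 → k r * h r j ≠ 0 →
      ((13 * (j:ℤ) - 9).fdiv 14) ≤ (padicValInt 13 (k r * h r j) : ℤ) :=
  stmt14_general h k hh2 hk hk7
end

section
/- Let u, c : ℕ → ℕ → ℤ and suppose for all r, j ≥ 1: 13^max(0, ⌊(13r-9)/14⌋) divides u 1 r, and 13^max(0, ⌊(13j-r-1)/14⌋) divides c r j. Fix N ≥ 1 and define v j = Σ_{r=1}^{N} (u 1 r) * (c r j). Then for every j ≥ 1, 13^max(0, ⌊(13j-2)/14⌋) divides v j. -/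
theorem stmt15 (u c : ℕ → ℕ → ℤ)
    (hu : ∀ r : ℕ, 1 ≤ r → (13:ℤ)^((max 0 ((13 * (r:ℤ) - 9).fdiv 14)).toNat) ∣ u 1 r)
    (hc : ∀ r j : ℕ, 1 ≤ r → 1 ≤ j →
      (13:ℤ)^((max 0 ((13 * (j:ℤ) - r - 1).fdiv 14)).toNat) ∣ c r j)
    (N : ℕ) (hN : 1 ≤ N) :
    ∀ j : ℕ, 1 ≤ j →
      (13:ℤ)^((max 0 ((13 * (j:ℤ) - 2).fdiv 14)).toNat) ∣
        ∑ r ∈ Finset.Icc 1 N, (u 1 r) * (c r j) := by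
  intro j hj
  apply Finset.dvd_sum
  intro r hr
  rw [Finset.mem_Icc] at hr
  have hr1 : 1 ≤ r := hr.1
  have h1 := hu r hr1
  have h2 := hc r j hr1 hj
  have h3 : (13:ℤ)^((max 0 ((13 * (r:ℤ) - 9).fdiv 14)).toNat +
      (max 0 ((13 * (j:ℤ) - r - 1).fdiv 14)).toNat) ∣ u 1 r * c r j := by
    rw [pow_add]; exact mul_dvd_mul h1 h2
  refine dvd_trans (pow_dvd_pow 13 ?_) h3
  have e1 : (13 * (r:ℤ) - 9).fdiv 14 = (13 * (r:ℤ) - 9) / 14 :=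
    Int.fdiv_eq_ediv_of_nonneg _ (by norm_num)
  have e2 : (13 * (j:ℤ) - r - 1).fdiv 14 = (13 * (j:ℤ) - r - 1) / 14 :=
    Int.fdiv_eq_ediv_of_nonneg _ (by norm_num)
  have e3 : (13 * (j:ℤ) - 2).fdiv 14 = (13 * (j:ℤ) - 2) / 14 :=
    Int.fdiv_eq_ediv_of_nonneg _ (by norm_num)
  rw [e1, e2, e3]
  omega
end

section
/- Let v, d : ℕ → ℤ-valued double sequences with: 13^max(0, ⌊(13r-2)/14⌋) divides v r for all r ≥ 1, and 13^max(0, ⌊(13j-r-8)/14⌋) divides d r j for all r, j ≥ 1. Fix N ≥ 1 and define w j = Σ_{r=1}^{N} (v r) * (d r j). Then 13^max(0, ⌊(13j-9)/14⌋) divides w j for every j ≥ 1. -/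
/-!
Each term `v r * d r j` is divisible by `13 ^ (⌊(13r-2)/14⌋⁺ + ⌊(13j-r-8)/14⌋⁺)`, and this exponent
is at least `⌊(13j-9)/14⌋⁺`: since `(13r-2) + (13j-r-8) = (13j-9) + (12r-1)`, for `r ≥ 2` the slack
`12r-1 ≥ 13` absorbs the rounding of the two floors, while for `r = 1` the first floor is `0` and the
other two arguments coincide.
-/

def posFloorDiv14 (a : ℤ) : ℕ := (max 0 (a.fdiv 14)).toNat

lemma posFloorDiv14_le_add (r j : ℤ) (hr : 1 ≤ r) :
    posFloorDiv14 (13 * j - 9) ≤ posFloorDiv14 (13 * r - 2) + posFloorDiv14 (13 * j - r - 8) := by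
  simp only [posFloorDiv14, Int.fdiv_eq_ediv_of_nonneg _ (by norm_num : (0 : ℤ) ≤ 14)]
  omega

lemma pow_dvd_mul_of_le_add {R : Type*} [CommMonoid R] {p x y : R} {a b c : ℕ}
    (hx : p ^ a ∣ x) (hy : p ^ b ∣ y) (hc : c ≤ a + b) : p ^ c ∣ x * y :=
  (pow_dvd_pow p hc).trans (pow_add p a b ▸ mul_dvd_mul hx hy)

theorem stmt16_general (v : ℕ → ℤ) (d : ℕ → ℕ → ℤ)
    (hv : ∀ r : ℕ, 1 ≤ r → (13:ℤ)^((max 0 ((13 * (r:ℤ) - 2).fdiv 14)).toNat) ∣ v r)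
    (hd : ∀ r j : ℕ, 1 ≤ r → 1 ≤ j →
      (13:ℤ)^((max 0 ((13 * (j:ℤ) - r - 8).fdiv 14)).toNat) ∣ d r j)
    (N : ℕ) :
    ∀ j : ℕ, 1 ≤ j →
      (13:ℤ)^((max 0 ((13 * (j:ℤ) - 9).fdiv 14)).toNat) ∣
        ∑ r ∈ Finset.Icc 1 N, (v r) * (d r j) := by
  intro j hj
  refine Finset.dvd_sum fun r hr => ?_
  have hr1 : 1 ≤ r := (Finset.mem_Icc.mp hr).1
  exact pow_dvd_mul_of_le_add (hv r hr1) (hd r j hr1 hj)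
    (posFloorDiv14_le_add r j (by exact_mod_cast hr1))

theorem stmt16 (v : ℕ → ℤ) (d : ℕ → ℕ → ℤ)
    (hv : ∀ r : ℕ, 1 ≤ r → (13:ℤ)^((max 0 ((13 * (r:ℤ) - 2).fdiv 14)).toNat) ∣ v r)
    (hd : ∀ r j : ℕ, 1 ≤ r → 1 ≤ j →
      (13:ℤ)^((max 0 ((13 * (j:ℤ) - r - 8).fdiv 14)).toNat) ∣ d r j)
    (N : ℕ) (hN : 1 ≤ N) :
    ∀ j : ℕ, 1 ≤ j →
      (13:ℤ)^((max 0 ((13 * (j:ℤ) - 9).fdiv 14)).toNat) ∣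
        ∑ r ∈ Finset.Icc 1 N, (v r) * (d r j) :=
  stmt16_general v d hv hd N
end
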